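/- Every infinite, connected, locally finite simple graph G contains an infinite isometric path: there exists an injective map f : ℕ → V(G) such that the graph distance satisfies d_G(f(i), f(j)) = |i − j| for all i, j ∈ ℕ. -/

import Mathlib

open SimpleGraph

/-- An induced path of length `n` in `G`: an injective sequence of `n+1` vertices,
adjacent exactly when consecutive. -/
def IsInducedPath {V : Type*} (G : SimpleGraph V) {n : ℕ} (x : Fin (n + 1) → V) : Prop :=
  Function.Injective x ∧ ∀ i j, G.Adj (x i) (x j) ↔ Nat.dist i.val j.val = 1

/-- `G` contains finite induced paths of unbounded length. -/
def HasUnboundedPaths {V : Type*} (G : SimpleGraph V) : Prop :=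
  ∀ n : ℕ, ∃ x : Fin (n + 1) → V, IsInducedPath G x

/-- `G` is path-minimal. -/
def PathMinimal {V : Type*} (G : SimpleGraph V) : Prop :=
  HasUnboundedPaths G ∧
    ∀ A : Set V, HasUnboundedPaths (G.induce A) → Nonempty (G ↪g G.induce A)

/-- The age of `G` is contained in the age of `H`. -/
def AgeSubset {V W : Type*} (G : SimpleGraph V) (H : SimpleGraph W) : Prop :=
  ∀ (n : ℕ) (F : SimpleGraph (Fin n)), Nonempty (F ↪g G) → Nonempty (F ↪g H)

/-- The age of `G` contains no infinite antichain for embeddability. -/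
def AgeWQO {V : Type*} (G : SimpleGraph V) : Prop :=
  ∀ f : ℕ → Σ n : ℕ, SimpleGraph (Fin n),
    (∀ i, Nonempty ((f i).2 ↪g G)) →
    ∃ i j, i ≠ j ∧ Nonempty ((f i).2 ↪g (f j).2)

/-- The set `A` carries an induced path of length `n` of `G` (covering all of `A`). -/
def IsPathOn {V : Type*} (G : SimpleGraph V) (A : Set V) (n : ℕ) : Prop :=
  ∃ x : Fin (n + 1) → V, Function.Injective x ∧ Set.range x = A ∧
    ∀ i j, G.Adj (x i) (x j) ↔ Nat.dist i.val j.val = 1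

/-- `G` embeds a direct sum of finite induced paths of unbounded length. -/
def EmbedsDirectSumOfPaths {V : Type*} (G : SimpleGraph V) : Prop :=
  ∃ A : ℕ → Set V, (∀ n, (A n).Finite) ∧
    (∀ m n, m ≠ n → Disjoint (A m) (A n)) ∧
    (∀ m n, m ≠ n → ∀ x ∈ A m, ∀ y ∈ A n, ¬ G.Adj x y) ∧
    ∀ n, ∃ m, n ≤ m ∧ IsPathOn G (A n) m

/-- `G` embeds a complete sum of finite induced paths of unbounded length. -/
def EmbedsCompleteSumOfPaths {V : Type*} (G : SimpleGraph V) : Prop :=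
  ∃ A : ℕ → Set V, (∀ n, (A n).Finite) ∧
    (∀ m n, m ≠ n → Disjoint (A m) (A n)) ∧
    (∀ m n, m ≠ n → ∀ x ∈ A m, ∀ y ∈ A n, G.Adj x y) ∧
    ∀ n, ∃ m, n ≤ m ∧ IsPathOn G (A n) m

/-- An isometric path of length `n` in `G`. -/
def IsIsometricPath {V : Type*} (G : SimpleGraph V) {n : ℕ} (x : Fin (n + 1) → V) : Prop :=
  (∀ i : Fin n, G.Adj (x i.castSucc) (x i.succ)) ∧
  ∀ i j, G.dist (x i) (x j) = Nat.dist i.val j.val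

/-- The set `A` carries an induced path of length `n` of `G` which is isometric in `G`. -/
def IsIsometricPathOn {V : Type*} (G : SimpleGraph V) (A : Set V) (n : ℕ) : Prop :=
  ∃ x : Fin (n + 1) → V, Function.Injective x ∧ Set.range x = A ∧
    (∀ i j, G.Adj (x i) (x j) ↔ Nat.dist i.val j.val = 1) ∧
    (∀ i j, G.dist (x i) (x j) = Nat.dist i.val j.val)

/-- The incomparability graph of a poset. -/
def incGraph (α : Type*) [PartialOrder α] : SimpleGraph α where
  Adj a b := ¬ a ≤ b ∧ ¬ b ≤ a
  symm := ⟨fun _ _ h => ⟨h.2, h.1⟩⟩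
  loopless := ⟨fun _ h => h.1 le_rfl⟩

/-- `w` is a (finite) factor of the infinite word `u`. -/
def IsFactor {A : Type*} (u : ℕ → A) (w : List A) : Prop :=
  ∃ p : ℕ, w = (List.range w.length).map fun i => u (p + i)

/-- `u` is uniformly recurrent. -/
def UniformlyRecurrent {A : Type*} (u : ℕ → A) : Prop :=
  ∀ n : ℕ, ∃ m : ℕ, ∀ v w : List A, IsFactor u v → IsFactor u w →
    v.length = n → w.length = m → v <:+: w

/-- The set of factors of `u` is inexhaustible. -/
def Inexhaustible {A : Type*} (u : ℕ → A) : Prop :=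
  ∀ v v' : List A, IsFactor u v → IsFactor u v' → ∃ w : List A, IsFactor u (v ++ w ++ v')

/-- The path on `n` vertices. -/
def pathG (n : ℕ) : SimpleGraph (Fin n) where
  Adj i j := Nat.dist i.val j.val = 1
  symm := ⟨fun i j h => by rwa [Nat.dist_comm]⟩
  loopless := ⟨fun i h => by simp [Nat.dist_self] at h⟩

/-- The graph `Ĝ_k` on `ℕ × ℕ`. -/
def Ghat (k : ℕ) : SimpleGraph (ℕ × ℕ) where
  Adj a b := (a.1 = b.1 ∧ Nat.dist a.2 b.2 = 1) ∨ (a.1 ≠ b.1 ∧ ¬ a.2 ≡ b.2 [MOD k])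
  symm := by
    refine ⟨fun a b h => ?_⟩
    rcases h with ⟨h1, h2⟩ | ⟨h1, h2⟩
    · exact Or.inl ⟨h1.symm, by rwa [Nat.dist_comm]⟩
    · exact Or.inr ⟨h1.symm, fun h => h2 h.symm⟩
  loopless := by
    refine ⟨fun a h => ?_⟩
    rcases h with ⟨_, h2⟩ | ⟨h1, _⟩
    · simp [Nat.dist_self] at h2
    · exact h1 rfl

/-- The vertex set of `Q̂_k`. -/
def Qset : Set (ℕ × ℕ) := {p : ℕ × ℕ | p.2 < p.1 + 5}

/-- The graph `Q̂_k`, induced by `Ĝ_k` on `Qset`. -/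
def Qhat (k : ℕ) : SimpleGraph Qset := (Ghat k).induce Qset

/-- `M` is a module (autonomous set) of `G`. -/
def IsModule {V : Type*} (G : SimpleGraph V) (M : Set V) : Prop :=
  ∀ v ∉ M, (∀ x ∈ M, G.Adj v x) ∨ (∀ x ∈ M, ¬ G.Adj v x)

/-- A trivial subset of a vertex set: empty, a singleton, or everything. -/
def IsTrivialSet {V : Type*} (M : Set V) : Prop :=
  M = ∅ ∨ (∃ v, M = {v}) ∨ M = Set.univ

/-- The graph `Ĝ_{u,⊕}` associated with the word `u : ℕ → Bool` and the Boolean sum. -/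
def GhatXor (u : ℕ → Bool) : SimpleGraph (ℕ × ℕ) where
  Adj a b := (a.1 = b.1 ∧ Nat.dist a.2 b.2 = 1) ∨ (a.1 ≠ b.1 ∧ u a.2 ≠ u b.2)
  symm := by
    refine ⟨fun a b h => ?_⟩
    rcases h with ⟨h1, h2⟩ | ⟨h1, h2⟩
    · exact Or.inl ⟨h1.symm, by rwa [Nat.dist_comm]⟩
    · exact Or.inr ⟨h1.symm, h2.symm⟩
  loopless := by
    refine ⟨fun a h => ?_⟩
    rcases h with ⟨_, h2⟩ | ⟨h1, _⟩
    · simp [Nat.dist_self] at h2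
    · exact h1 rfl

/-- The graph `Ĝ_{u,π₂}` associated with the word `u : ℕ → Bool` and the second projection. -/
def GhatPi2 (u : ℕ → Bool) : SimpleGraph (ℕ × ℕ) where
  Adj a b := (a.1 = b.1 ∧ Nat.dist a.2 b.2 = 1) ∨
    (a.1 < b.1 ∧ u b.2 = true) ∨ (b.1 < a.1 ∧ u a.2 = true)
  symm := by
    refine ⟨fun a b h => ?_⟩
    rcases h with ⟨h1, h2⟩ | ⟨h1, h2⟩ | ⟨h1, h2⟩
    · exact Or.inl ⟨h1.symm, by rwa [Nat.dist_comm]⟩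
    · exact Or.inr (Or.inr ⟨h1, h2⟩)
    · exact Or.inr (Or.inl ⟨h1, h2⟩)
  loopless := by
    refine ⟨fun a h => ?_⟩
    rcases h with ⟨_, h2⟩ | ⟨h1, _⟩ | ⟨h1, _⟩
    · simp [Nat.dist_self] at h2
    · exact lt_irrefl _ h1
    · exact lt_irrefl _ h1

/-- `u` has a constant factor of length `m`. -/
def HasConstFactor (u : ℕ → Bool) (m : ℕ) : Prop :=
  ∃ p : ℕ, ∀ i < m, u (p + i) = u p

/-!
Order the vertices (`GeodesicOrder G r`) by `u ≤ w` iff `u` lies on a shortest path from a root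
`r` to `w`. A cover `u ⋖ w` in this order is an edge with `d(r, w) = d(r, u) + 1`, so by local
finiteness every vertex has finitely many covers, and the order is graded by `d(r, ·)`. The order
is infinite with bottom `r`, so Kőnig's lemma gives an infinite chain of covers `f` starting at
`r`. Along it `d(r, f i) = i` and `f i ≤ f j` for `i ≤ j`, i.e. `d(f i, f j) = j - i`.
-/

namespace SimpleGraph

variable {V : Type*} {G : SimpleGraph V} {r : V}

def GeodesicOrder (_G : SimpleGraph V) (_r : V) : Type _ := V

namespace GeodesicOrder

def toVertex (u : GeodesicOrder G r) : V := u

def ofVertex (u : V) : GeodesicOrder G r := u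

@[simp]
lemma toVertex_ofVertex (u : V) : (ofVertex u : GeodesicOrder G r).toVertex = u := rfl

instance [Infinite V] : Infinite (GeodesicOrder G r) := ‹Infinite V›

variable [Fact G.Connected]

instance : PartialOrder (GeodesicOrder G r) where
  le u w := G.dist r u.toVertex + G.dist u.toVertex w.toVertex = G.dist r w.toVertex
  le_refl u := by simp
  le_trans u w x huw hwx := by
    have hG : G.Connected := Fact.out
    have := hG.dist_triangle (u := r) (v := u.toVertex) (w := x.toVertex)
    have := hG.dist_triangle (u := u.toVertex) (v := w.toVertex) (w := x.toVertex)
    change _ + _ = _ at huw hwx ⊢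
    omega
  le_antisymm u w huw hwu := by
    change _ + _ = _ at huw hwu
    rw [dist_comm (u := w.toVertex)] at hwu
    exact (Fact.out : G.Connected).dist_eq_zero_iff (u := u.toVertex) (v := w.toVertex)
      |>.mp (by omega)

lemma le_iff {u w : GeodesicOrder G r} :
    u ≤ w ↔ G.dist r u.toVertex + G.dist u.toVertex w.toVertex = G.dist r w.toVertex :=
  Iff.rfl

instance : OrderBot (GeodesicOrder G r) where
  bot := ofVertex r
  bot_le w := by simp [le_iff]

lemma dist_lt_dist_of_lt {u w : GeodesicOrder G r} (h : u < w) :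
    G.dist r u.toVertex < G.dist r w.toVertex := by
  have := (Fact.out : G.Connected).pos_dist_of_ne (u := u.toVertex) (v := w.toVertex) h.ne
  have := le_iff.mp h.le
  omega

/-- The second vertex `x` of a shortest path from `u` to `w` satisfies `u < x ≤ w`,
so a cover `w` of `u` must be `x` itself. -/
lemma adj_and_dist_eq_of_covBy {u w : GeodesicOrder G r} (h : u ⋖ w) :
    G.Adj u.toVertex w.toVertex ∧ G.dist r w.toVertex = G.dist r u.toVertex + 1 := by
  have hG : G.Connected := Fact.out
  have huw := le_iff.mp h.le
  obtain ⟨p, hp⟩ := hG.exists_walk_length_eq_dist u.toVertex w.toVertex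
  cases p with
  | nil => exact absurd rfl h.ne
  | @cons _ x _ hux q =>
    have hq : G.dist x w.toVertex ≤ q.length := dist_le q
    have hrx := hG.dist_triangle (u := r) (v := u.toVertex) (w := x)
    have hrw := hG.dist_triangle (u := r) (v := x) (w := w.toVertex)
    have hux' : G.dist u.toVertex x = 1 := dist_eq_one_iff_adj.mpr hux
    rw [Walk.length_cons] at hp
    have hlt : u < ofVertex x := lt_of_le_of_ne (le_iff.mpr (by simp only [toVertex_ofVertex]; omega)) (G.ne_of_adj hux)
    have hxw : ofVertex x = w := eq_of_le_of_not_lt (le_iff.mpr (by simp only [toVertex_ofVertex]; omega)) (h.2 hlt)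
    subst hxw
    exact ⟨hux, by simp only [toVertex_ofVertex]; omega⟩

noncomputable instance : GradeMinOrder ℕ (GeodesicOrder G r) where
  grade u := G.dist r u.toVertex
  grade_strictMono _ _ := dist_lt_dist_of_lt
  covBy_grade _ _ h := Order.covBy_iff_add_one_eq.mpr (adj_and_dist_eq_of_covBy h).2.symm
  isMin_grade u hu := by
    rw [hu.eq_bot]
    exact isMin_iff_eq_bot.mpr (dist_self (G := G))

instance : WellFoundedLT (GeodesicOrder G r) :=
  GradeOrder.wellFoundedLT ℕ

lemma finite_setOf_covBy (hlf : ∀ v : V, (G.neighborSet v).Finite) (u : GeodesicOrder G r) :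
    {w | u ⋖ w}.Finite :=
  ((hlf u.toVertex).image ofVertex).subset fun w h ↦
    ⟨w.toVertex, (adj_and_dist_eq_of_covBy h).1, rfl⟩

end GeodesicOrder

theorem Connected.exists_geodesic_ray [Infinite V] (hG : G.Connected)
    (hlf : ∀ v : V, (G.neighborSet v).Finite) (r : V) :
    ∃ f : ℕ → V, f 0 = r ∧ ∀ i j, G.dist (f i) (f j) = Nat.dist i j := by
  have : Fact G.Connected := ⟨hG⟩
  obtain ⟨f, hf0, -, hgrade⟩ := GradeMinOrder.exists_nat_orderEmbedding_of_forall_covby_finite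
    (α := GeodesicOrder G r) (GeodesicOrder.finite_setOf_covBy hlf)
  have hdist {i j : ℕ} (hij : i ≤ j) : G.dist (f i).toVertex (f j).toVertex = j - i := by
    have := GeodesicOrder.le_iff.mp (f.monotone hij)
    have hi : G.dist r (f i).toVertex = i := hgrade i
    have hj : G.dist r (f j).toVertex = j := hgrade j
    omega
  refine ⟨fun i ↦ (f i).toVertex, congrArg GeodesicOrder.toVertex hf0, fun i j ↦ ?_⟩
  rcases le_total i j with hij | hji
  · rw [hdist hij, Nat.dist_eq_sub_of_le hij]
  · rw [dist_comm, hdist hji, Nat.dist_eq_sub_of_le_right hji]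

end SimpleGraph

theorem exists_infinite_isometric_path {V : Type*} (G : SimpleGraph V) [Infinite V]
    (hconn : G.Connected) (hlf : ∀ v : V, (G.neighborSet v).Finite) :
    ∃ f : ℕ → V, Function.Injective f ∧ ∀ i j : ℕ, G.dist (f i) (f j) = Nat.dist i j := by
  obtain ⟨f, -, hf⟩ := hconn.exists_geodesic_ray hlf (Classical.arbitrary V)
  refine ⟨f, fun i j hij ↦ Nat.eq_of_dist_eq_zero ?_, hf⟩
  rw [← hf, hij, dist_self]
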